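/- Let n ≥ 1 be an integer, b ∈ (0,1), and let f, g : ℝⁿ → ℂ be measurable functions. Define for a measurable h : ℝⁿ → ℂ the Stein derivative 𝒟^b h(x) = (∫_{ℝⁿ} |h(x) − h(y)|² / |x − y|^{n+2b} dy)^{1/2}, with values in [0,∞]. Then (∫_{ℝⁿ} (𝒟^b(f·g)(x))² dx)^{1/2} ≤ (∫_{ℝⁿ} |f(x)|² (𝒟^b g(x))² dx)^{1/2} + (∫_{ℝⁿ} |g(x)|² (𝒟^b f(x))² dx)^{1/2}, where all the integrals are interpreted in [0,∞]. -/
import Mathlib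


open MeasureTheory
open scoped ENNReal

/-- The Stein derivative of order `b` of a measurable function `h : ℝⁿ → ℂ`, with
values in `[0,∞]`: `𝒟^b h(x) = (∫_{ℝⁿ} |h(x) − h(y)|² / |x − y|^{n+2b} dy)^{1/2}`. -/
noncomputable def steinD (n : ℕ) (b : ℝ) (h : EuclideanSpace ℝ (Fin n) → ℂ)
    (x : EuclideanSpace ℝ (Fin n)) : ℝ≥0∞ :=
  (∫⁻ y, ((‖h x - h y‖₊ : ℝ≥0∞) ^ 2 / (‖x - y‖₊ : ℝ≥0∞) ^ ((n : ℝ) + 2 * b))) ^ ((1 : ℝ) / 2)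


lemma half_sq (z : ℝ≥0∞) : (z ^ ((1:ℝ)/2)) ^ 2 = z := by
  rw [← ENNReal.rpow_natCast _ 2, ← ENNReal.rpow_mul]
  norm_num

lemma rpow_two' (z : ℝ≥0∞) : z ^ (2:ℝ) = z ^ 2 := by
  rw [← ENNReal.rpow_natCast _ 2]; norm_num

lemma sq_div_helper (a K : ℝ≥0∞) :
    a ^ 2 / K = (a * K⁻¹ ^ ((1:ℝ)/2)) ^ 2 := by
  rw [mul_pow, half_sq, div_eq_mul_inv]

lemma steinD_sq (n : ℕ) (b : ℝ) (h : EuclideanSpace ℝ (Fin n) → ℂ)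
    (x : EuclideanSpace ℝ (Fin n)) :
    steinD n b h x ^ 2
      = ∫⁻ y, ((‖h x - h y‖₊ : ℝ≥0∞) ^ 2 / (‖x - y‖₊ : ℝ≥0∞) ^ ((n : ℝ) + 2 * b)) := by
  rw [steinD, half_sq]

section main
variable (n : ℕ) (b : ℝ) (f g : EuclideanSpace ℝ (Fin n) → ℂ)

local notation "E" => EuclideanSpace ℝ (Fin n)

noncomputable def wgt (x y : E) : ℝ≥0∞ :=
  (((‖x - y‖₊ : ℝ≥0∞) ^ ((n : ℝ) + 2 * b))⁻¹) ^ ((1:ℝ)/2)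

lemma wgt_meas : Measurable (fun p : E × E => wgt n b p.1 p.2) := by
  apply (ENNReal.continuous_rpow_const.measurable).comp
  apply Measurable.inv
  apply (ENNReal.continuous_rpow_const.measurable).comp
  exact (measurable_fst.sub measurable_snd).nnnorm.coe_nnreal_ennreal

lemma nnnorm_sub_rev' {G : Type*} [SeminormedAddGroup G] (x y : G) : ‖x - y‖₊ = ‖y - x‖₊ := by
  rw [← nnnorm_neg, neg_sub]

lemma wgt_symm (x y : E) : wgt n b x y = wgt n b y x := by
  rw [wgt, wgt, nnnorm_sub_rev']

noncomputable def Uf (x y : E) : ℝ≥0∞ := (‖f x‖₊ : ℝ≥0∞) * ‖g x - g y‖₊ * wgt n b x y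
noncomputable def Vf (x y : E) : ℝ≥0∞ := (‖g y‖₊ : ℝ≥0∞) * ‖f x - f y‖₊ * wgt n b x y

lemma Uf_meas (hf : Measurable f) (hg : Measurable g) :
    Measurable (fun p : E × E => Uf n b f g p.1 p.2) :=
  (((hf.comp measurable_fst).nnnorm.coe_nnreal_ennreal).mul
    (((hg.comp measurable_fst).sub (hg.comp measurable_snd)).nnnorm.coe_nnreal_ennreal)).mul
    (wgt_meas n b)

lemma Vf_meas (hf : Measurable f) (hg : Measurable g) :
    Measurable (fun p : E × E => Vf n b f g p.1 p.2) :=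
  (((hg.comp measurable_snd).nnnorm.coe_nnreal_ennreal).mul
    (((hf.comp measurable_fst).sub (hf.comp measurable_snd)).nnnorm.coe_nnreal_ennreal)).mul
    (wgt_meas n b)

lemma Uf_sq (x y : E) :
    Uf n b f g x y ^ 2
      = (‖f x‖₊ : ℝ≥0∞) ^ 2
          * ((‖g x - g y‖₊ : ℝ≥0∞) ^ 2 / (‖x - y‖₊ : ℝ≥0∞) ^ ((n : ℝ) + 2 * b)) := by
  rw [Uf, sq_div_helper, wgt, mul_assoc, mul_pow]

lemma Vf_sq (x y : E) :
    Vf n b f g x y ^ 2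
      = (‖g y‖₊ : ℝ≥0∞) ^ 2
          * ((‖f x - f y‖₊ : ℝ≥0∞) ^ 2 / (‖x - y‖₊ : ℝ≥0∞) ^ ((n : ℝ) + 2 * b)) := by
  rw [Vf, sq_div_helper, wgt, mul_assoc, mul_pow]

end main

/-- Leibniz-type estimate for the Stein derivative:
`‖𝒟^b(fg)‖_{L²} ≤ ‖f 𝒟^b g‖_{L²} + ‖g 𝒟^b f‖_{L²}`, all integrals in `[0,∞]`. -/
theorem steinD_mul_L2_le (n : ℕ) (hn : 1 ≤ n) (b : ℝ) (hb : b ∈ Set.Ioo (0 : ℝ) 1)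
    (f g : EuclideanSpace ℝ (Fin n) → ℂ) (hf : Measurable f) (hg : Measurable g) :
    (∫⁻ x, (steinD n b (fun z => f z * g z) x) ^ 2) ^ ((1 : ℝ) / 2)
      ≤ (∫⁻ x, (‖f x‖₊ : ℝ≥0∞) ^ 2 * (steinD n b g x) ^ 2) ^ ((1 : ℝ) / 2)
        + (∫⁻ x, (‖g x‖₊ : ℝ≥0∞) ^ 2 * (steinD n b f x) ^ 2) ^ ((1 : ℝ) / 2) := by
  set A : EuclideanSpace ℝ (Fin n) → ℝ≥0∞ :=
    fun x => (∫⁻ y, Uf n b f g x y ^ 2) ^ ((1:ℝ)/2) with hA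
  set B : EuclideanSpace ℝ (Fin n) → ℝ≥0∞ :=
    fun x => (∫⁻ y, Vf n b f g x y ^ 2) ^ ((1:ℝ)/2) with hB
  have hUm := Uf_meas n b f g hf hg
  have hVm := Vf_meas n b f g hf hg
  -- pointwise estimate
  have hpt : ∀ x, steinD n b (fun z => f z * g z) x ≤ A x + B x := by
    intro x
    have h1 : steinD n b (fun z => f z * g z) x
        ≤ (∫⁻ y, (Uf n b f g x y + Vf n b f g x y) ^ 2) ^ ((1:ℝ)/2) := by
      rw [steinD]
      apply ENNReal.rpow_le_rpow _ (by norm_num)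
      apply lintegral_mono
      intro y
      dsimp only
      rw [sq_div_helper]
      have hnn : (‖f x * g x - f y * g y‖₊ : ℝ≥0∞)
          ≤ (‖f x‖₊ : ℝ≥0∞) * ‖g x - g y‖₊ + (‖g y‖₊ : ℝ≥0∞) * ‖f x - f y‖₊ := by
        have : f x * g x - f y * g y = f x * (g x - g y) + (f x - f y) * g y := by ring
        calc (‖f x * g x - f y * g y‖₊ : ℝ≥0∞)
            = ‖f x * (g x - g y) + (f x - f y) * g y‖₊ := by rw [this]
          _ ≤ (‖f x * (g x - g y)‖₊ : ℝ≥0∞) + ‖(f x - f y) * g y‖₊ := by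
              exact_mod_cast nnnorm_add_le _ _
          _ = (‖f x‖₊ : ℝ≥0∞) * ‖g x - g y‖₊ + (‖g y‖₊ : ℝ≥0∞) * ‖f x - f y‖₊ := by
              push_cast [nnnorm_mul]; ring
      calc ((‖f x * g x - f y * g y‖₊ : ℝ≥0∞)
              * ((‖x - y‖₊ : ℝ≥0∞) ^ ((n : ℝ) + 2 * b))⁻¹ ^ ((1:ℝ)/2)) ^ 2
          ≤ (((‖f x‖₊ : ℝ≥0∞) * ‖g x - g y‖₊ + (‖g y‖₊ : ℝ≥0∞) * ‖f x - f y‖₊)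
              * ((‖x - y‖₊ : ℝ≥0∞) ^ ((n : ℝ) + 2 * b))⁻¹ ^ ((1:ℝ)/2)) ^ 2 := by
            exact pow_le_pow_left' (mul_le_mul_left hnn _) 2
        _ = (Uf n b f g x y + Vf n b f g x y) ^ 2 := by
            rw [Uf, Vf, wgt, add_mul]
    refine h1.trans ?_
    have hmink := ENNReal.lintegral_Lp_add_le (p := 2)
      (μ := (volume : Measure (EuclideanSpace ℝ (Fin n))))
      (f := fun y => Uf n b f g x y) (g := fun y => Vf n b f g x y)
      ((hUm.comp measurable_prodMk_left).aemeasurable)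
      ((hVm.comp measurable_prodMk_left).aemeasurable)
      one_le_two
    simp only [rpow_two'] at hmink
    norm_num at hmink ⊢
    exact hmink
  -- measurability of A and B
  have hAm : Measurable A :=
    ENNReal.continuous_rpow_const.measurable.comp
      (Measurable.lintegral_prod_right (hUm.pow_const 2))
  have hBm : Measurable B :=
    ENNReal.continuous_rpow_const.measurable.comp
      (Measurable.lintegral_prod_right (hVm.pow_const 2))
  have hAsq : ∀ x, A x ^ 2 = (‖f x‖₊ : ℝ≥0∞) ^ 2 * steinD n b g x ^ 2 := by
    intro x
    rw [hA]
    dsimp only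
    rw [half_sq, steinD_sq]
    rw [← lintegral_const_mul' _ _ (by simp : ((‖f x‖₊ : ℝ≥0∞) ^ 2) ≠ ∞)]
    exact lintegral_congr fun y => Uf_sq n b f g x y
  have hBsq : (∫⁻ x, B x ^ 2) = ∫⁻ x, (‖g x‖₊ : ℝ≥0∞) ^ 2 * steinD n b f x ^ 2 := by
    have h1 : (∫⁻ x, B x ^ 2) = ∫⁻ x, ∫⁻ y, Vf n b f g x y ^ 2 := by
      exact lintegral_congr fun x => by rw [hB]; dsimp only; rw [half_sq]
    rw [h1, lintegral_lintegral_swap ((hVm.pow_const 2).aemeasurable)]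
    refine lintegral_congr fun y => ?_
    calc (∫⁻ x, Vf n b f g x y ^ 2)
        = ∫⁻ x, (‖g y‖₊ : ℝ≥0∞) ^ 2
            * ((‖f y - f x‖₊ : ℝ≥0∞) ^ 2 / (‖y - x‖₊ : ℝ≥0∞) ^ ((n : ℝ) + 2 * b)) := by
          refine lintegral_congr fun x => ?_
          rw [Vf_sq, nnnorm_sub_rev' (f x), nnnorm_sub_rev' x]
      _ = (‖g y‖₊ : ℝ≥0∞) ^ 2 * steinD n b f y ^ 2 := by
          rw [lintegral_const_mul' _ _ (by simp : ((‖g y‖₊ : ℝ≥0∞) ^ 2) ≠ ∞), steinD_sq]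
  calc (∫⁻ x, steinD n b (fun z => f z * g z) x ^ 2) ^ ((1:ℝ)/2)
      ≤ (∫⁻ x, (A x + B x) ^ 2) ^ ((1:ℝ)/2) := by
        refine ENNReal.rpow_le_rpow ?_ (by norm_num)
        exact lintegral_mono fun x => pow_le_pow_left' (hpt x) 2
    _ ≤ (∫⁻ x, A x ^ 2) ^ ((1:ℝ)/2) + (∫⁻ x, B x ^ 2) ^ ((1:ℝ)/2) := by
        have h := ENNReal.lintegral_Lp_add_le (p := 2)
          (μ := (volume : Measure (EuclideanSpace ℝ (Fin n))))
          hAm.aemeasurable hBm.aemeasurable one_le_two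
        simp only [rpow_two'] at h
        norm_num at h ⊢
        exact h
    _ = (∫⁻ x, (‖f x‖₊ : ℝ≥0∞) ^ 2 * (steinD n b g x) ^ 2) ^ ((1 : ℝ) / 2)
        + (∫⁻ x, (‖g x‖₊ : ℝ≥0∞) ^ 2 * (steinD n b f x) ^ 2) ^ ((1 : ℝ) / 2) := by
        rw [lintegral_congr hAsq, hBsq]
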